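/- Suppose there exists a Steiner system S(w,w',n) whose block set can be partitioned into p = C(n-t,w-t)/C(w'-t,w-t) pairwise disjoint block sets each forming an S(t,w',n) (a t-resolvable S(w,w',n)), and suppose there exists a large set LGS(t,w,w',g), i.e., a partition of all weight-w words on w' coordinates over alphabet size g+1 into g^{w-t}·C(w'-t,w-t) pairwise disjoint generalized Steiner systems GS(t,w,w',g). Then there exists a large set LGS(t,w,n,g): a partition of all C(n,w)·g^w weight-w words of length n over Z_{g+1} into pairwise disjoint generalized Steiner systems GS(t,w,n,g). -/

import Mathlib

/-!
Each resolution class `Q i` is an `S(t,w',n)`. Placing a copy of a `GS(t,w,w',g)` `C` on every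
block of `Q i` gives a `GS(t,w,n,g)`: a `t`-set lies in exactly one block, and two blocks of one
class share fewer than `t` points, so codewords on different blocks are at distance more than
`2(w-t)`. Letting `i` range over the classes and `C` over the large set yields the large set on
`n` points: the support of a weight-`w` word lies in exactly one block of the `S(w,w',n)`, which
fixes the class and the block, and the word's restriction to that block lies in exactly one
member of the large set.
-/

/-- `B` is a Steiner system `S(t,k,n)` on `Fin n`: all blocks have size `k`
and every `t`-subset lies in exactly one block. -/
def isSteiner (t k n : ℕ) (B : Finset (Finset (Fin n))) : Prop :=
  (∀ b ∈ B, b.card = k) ∧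
  ∀ T : Finset (Fin n), T.card = t → ∃! b, b ∈ B ∧ T ⊆ b

/-- `C` is a generalized Steiner system `GS(t,w,n,g)`, in codeword form:
a set of weight-`w` words of length `n` over `Z_{g+1}` with minimum Hamming
distance `2(w-t)+1` such that every assignment of nonzero values to `t`
distinct coordinates is extended by exactly one codeword. -/
def isGS (g t w n : ℕ) (C : Finset (Fin n → ZMod (g + 1))) : Prop :=
  (∀ x ∈ C, hammingNorm x = w) ∧
  (∀ x ∈ C, ∀ y ∈ C, x ≠ y → 2 * (w - t) + 1 ≤ hammingDist x y) ∧
  ∀ S : Finset (Fin n), S.card = t → ∀ f : Fin n → ZMod (g + 1),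
    (∀ i ∈ S, f i ≠ 0) → ∃! x, x ∈ C ∧ ∀ i ∈ S, x i = f i

open Finset Function

section WordsOnRange

variable {ι κ R : Type*} {e : ι → κ}

theorem eq_of_comp_eq_of_eq_zero_of_notMem_range [Zero R] {x y : κ → R}
    (hx : ∀ k ∉ Set.range e, x k = 0) (hy : ∀ k ∉ Set.range e, y k = 0) (h : x ∘ e = y ∘ e) :
    x = y := by
  funext k
  by_cases hk : k ∈ Set.range e
  · obtain ⟨i, rfl⟩ := hk
    exact congrFun h i
  · rw [hx k hk, hy k hk]

variable [Fintype ι] [Fintype κ] [DecidableEq R]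

theorem hammingDist_comp_of_eqOn_compl_range (he : Injective e) {x y : κ → R}
    (hxy : ∀ k ∉ Set.range e, x k = y k) : hammingDist (x ∘ e) (y ∘ e) = hammingDist x y := by
  classical
  have hfilter :
      ({k | x k ≠ y k} : Finset κ) = ({i | x (e i) ≠ y (e i)} : Finset ι).map ⟨e, he⟩ := by
    ext k
    by_cases hk : k ∈ Set.range e
    · obtain ⟨i, rfl⟩ := hk
      simp
    · simp only [mem_filter, mem_univ, true_and, hxy k hk, ne_eq, not_true_eq_false,
        false_iff, mem_map, Embedding.coeFn_mk, not_exists, not_and]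
      exact fun i _ hi => hk ⟨i, hi⟩
  simp only [hammingDist, hfilter, card_map, comp_apply]

variable [Zero R]

theorem hammingNorm_comp_of_eq_zero_of_notMem_range (he : Injective e) {x : κ → R}
    (hx : ∀ k ∉ Set.range e, x k = 0) : hammingNorm (x ∘ e) = hammingNorm x := by
  simpa [hammingDist_zero_right] using hammingDist_comp_of_eqOn_compl_range he (y := 0) hx

theorem filter_ne_zero_subset_iff [DecidableEq κ] {x : κ → R} {b : Finset κ} :
    ({k | x k ≠ 0} : Finset κ) ⊆ b ↔ ∀ k ∉ b, x k = 0 := by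
  simp only [subset_iff, mem_filter, mem_univ, true_and]
  exact forall_congr' fun k => not_imp_comm

/-- Outside `b ∩ b'`, the support of `x` and that of `y` contribute disjoint sets of
coordinates where `x` and `y` differ. -/
theorem hammingNorm_add_hammingNorm_sub_le_hammingDist [DecidableEq κ] {x y : κ → R}
    {b b' : Finset κ} (hx : ∀ k ∉ b, x k = 0) (hy : ∀ k ∉ b', y k = 0) :
    hammingNorm x + hammingNorm y - 2 * #(b ∩ b') ≤ hammingDist x y := by
  set X : Finset κ := {k | x k ≠ 0}
  set Y : Finset κ := {k | y k ≠ 0}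
  have hXb : X ⊆ b := filter_ne_zero_subset_iff.2 hx
  have hYb : Y ⊆ b' := filter_ne_zero_subset_iff.2 hy
  have hsub : X \ b' ∪ Y \ b ⊆ ({k | x k ≠ y k} : Finset κ) := by
    intro k hk
    simp only [mem_union, mem_sdiff, X, Y, mem_filter, mem_univ, true_and] at hk ⊢
    rcases hk with ⟨hxk, hk⟩ | ⟨hyk, hk⟩
    · rwa [hy k hk]
    · rw [hx k hk]
      exact Ne.symm hyk
  have hdisj : Disjoint (X \ b') (Y \ b) :=
    disjoint_left.2 fun k hkX hkY => (mem_sdiff.1 hkY).2 (hXb (mem_sdiff.1 hkX).1)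
  have hX := card_sdiff_add_card_inter X b'
  have hY := card_sdiff_add_card_inter Y b
  have hXb' : #(X ∩ b') ≤ #(b ∩ b') := card_le_card (inter_subset_inter_right hXb)
  have hYb' : #(Y ∩ b) ≤ #(b ∩ b') := by
    rw [inter_comm b]
    exact card_le_card (inter_subset_inter_right hYb)
  have hdist := card_le_card hsub
  rw [card_union_of_disjoint hdisj] at hdist
  change #X + #Y - 2 * #(b ∩ b') ≤ #({k | x k ≠ y k} : Finset κ)
  omega

end WordsOnRange

namespace isSteiner

variable {t k n : ℕ} {B : Finset (Finset (Fin n))} {b b' : Finset (Fin n)}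

theorem eq_of_subset (hB : isSteiner t k n B) {T : Finset (Fin n)} (hT : #T = t) (hb : b ∈ B)
    (hb' : b' ∈ B) (hTb : T ⊆ b) (hTb' : T ⊆ b') : b = b' :=
  (hB.2 T hT).unique ⟨hb, hTb⟩ ⟨hb', hTb'⟩

theorem card_inter_lt (hB : isSteiner t k n B) (hb : b ∈ B) (hb' : b' ∈ B) (hne : b ≠ b') :
    #(b ∩ b') < t := by
  by_contra! hle
  obtain ⟨T, hTsub, hT⟩ := exists_subset_card_eq hle
  exact hne (hB.eq_of_subset hT hb hb' (hTsub.trans inter_subset_left)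
    (hTsub.trans inter_subset_right))

end isSteiner

section BlockCode

variable {κ R : Type*} [LinearOrder κ] {m : ℕ}

theorem forall_notMem_range_orderEmbOfFin {b : Finset κ} (h : #b = m) {p : κ → Prop} :
    (∀ k ∉ Set.range (b.orderEmbOfFin h), p k) ↔ ∀ k ∉ b, p k := by
  simp [range_orderEmbOfFin]

variable [Fintype κ] [Zero R] [Fintype R] {Q : Finset (Finset κ)} {C : Finset (Fin m → R)}
  {x : κ → R}

/-- A copy of `C` placed on every block of `Q`, identifying each block with `Fin m` in
increasing order. -/
noncomputable def blockCode (Q : Finset (Finset κ)) (C : Finset (Fin m → R)) :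
    Finset (κ → R) := by
  classical
  exact {x | ∃ b ∈ Q, ∃ h : #b = m, (∀ k ∉ b, x k = 0) ∧ x ∘ b.orderEmbOfFin h ∈ C}

theorem mem_blockCode :
    x ∈ blockCode Q C ↔
      ∃ b ∈ Q, ∃ h : #b = m, (∀ k ∉ b, x k = 0) ∧ x ∘ b.orderEmbOfFin h ∈ C := by
  simp [blockCode]

theorem extend_mem_blockCode {b : Finset κ} (hb : b ∈ Q) (h : #b = m) {z : Fin m → R}
    (hz : z ∈ C) : extend (b.orderEmbOfFin h) z 0 ∈ blockCode Q C := by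
  refine mem_blockCode.2
    ⟨b, hb, h, fun k hk => ?_, by rwa [extend_comp (b.orderEmbOfFin h).injective]⟩
  rw [extend_apply' _ _ _ fun ⟨j, hj⟩ => hk (hj ▸ b.orderEmbOfFin_mem h j)]
  rfl

theorem hammingNorm_of_mem_blockCode [DecidableEq R] {w : ℕ} (hC : ∀ c ∈ C, hammingNorm c = w)
    (hx : x ∈ blockCode Q C) : hammingNorm x = w := by
  obtain ⟨b, -, h, hxb, hxC⟩ := mem_blockCode.1 hx
  rw [← hammingNorm_comp_of_eq_zero_of_notMem_range (b.orderEmbOfFin h).injective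
    ((forall_notMem_range_orderEmbOfFin h).2 hxb)]
  exact hC _ hxC

end BlockCode

section LargeSet

variable {g t w m n : ℕ} {Q : Finset (Finset (Fin n))} {C : Finset (Fin m → ZMod (g + 1))}

/-- Codewords on one block are as far apart as in `C`; codewords on two different blocks
of an `S(t,m,n)` have supports overlapping in fewer than `t` points. -/
theorem le_hammingDist_of_mem_blockCode (hQ : isSteiner t m n Q) (hC : isGS g t w m C)
    {x y : Fin n → ZMod (g + 1)} (hx : x ∈ blockCode Q C) (hy : y ∈ blockCode Q C)
    (hxy : x ≠ y) : 2 * (w - t) + 1 ≤ hammingDist x y := by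
  obtain ⟨b, hb, h, hxb, hxC⟩ := mem_blockCode.1 hx
  obtain ⟨b', hb', h', hyb, hyC⟩ := mem_blockCode.1 hy
  obtain rfl | hne := eq_or_ne b b'
  · have hxb' := (forall_notMem_range_orderEmbOfFin h).2 hxb
    have hyb' := (forall_notMem_range_orderEmbOfFin h).2 hyb
    have hxy' : x ∘ b.orderEmbOfFin h ≠ y ∘ b.orderEmbOfFin h := fun hcomp =>
      hxy (eq_of_comp_eq_of_eq_zero_of_notMem_range hxb' hyb' hcomp)
    calc 2 * (w - t) + 1 ≤ hammingDist (x ∘ b.orderEmbOfFin h) (y ∘ b.orderEmbOfFin h) :=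
          hC.2.1 _ hxC _ hyC hxy'
      _ = hammingDist x y :=
          hammingDist_comp_of_eqOn_compl_range (b.orderEmbOfFin h).injective fun k hk => by
            rw [hxb' k hk, hyb' k hk]
  · have hdist := hammingNorm_add_hammingNorm_sub_le_hammingDist hxb hyb
    have hinter := hQ.card_inter_lt hb hb' hne
    have hpos := hammingDist_pos.2 hxy
    rw [hammingNorm_of_mem_blockCode hC.1 hx, hammingNorm_of_mem_blockCode hC.1 hy] at hdist
    omega

theorem existsUnique_mem_blockCode (hQ : isSteiner t m n Q) (hC : isGS g t w m C)
    {S : Finset (Fin n)} (hS : #S = t) {f : Fin n → ZMod (g + 1)} (hf : ∀ i ∈ S, f i ≠ 0) :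
    ∃! x, x ∈ blockCode Q C ∧ ∀ i ∈ S, x i = f i := by
  obtain ⟨b, ⟨hb, hSb⟩, -⟩ := hQ.2 S hS
  have h := hQ.1 b hb
  set e := b.orderEmbOfFin h
  have hSe : ∀ i ∈ S, i ∈ Set.range e := fun i hi => by
    rw [range_orderEmbOfFin]
    exact hSb hi
  have hS' : #(S.preimage e e.injective.injOn) = t := by
    rw [card_preimage, filter_true_of_mem hSe, hS]
  obtain ⟨z, ⟨hzC, hzf⟩, hz⟩ :=
    hC.2.2 _ hS' (f ∘ e) fun j hj => hf _ (mem_preimage.1 hj)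
  refine ⟨extend e z 0, ⟨extend_mem_blockCode hb h hzC, fun i hi => ?_⟩, ?_⟩
  · obtain ⟨j, rfl⟩ := hSe i hi
    rw [e.injective.extend_apply]
    exact hzf j (mem_preimage.2 hi)
  · rintro y ⟨hy, hyf⟩
    obtain ⟨b', hb', h', hyb', hyC⟩ := mem_blockCode.1 hy
    have hSb' : S ⊆ b' := fun i hi => by
      by_contra hib
      exact hf i hi (hyf i hi ▸ hyb' i hib)
    obtain rfl := hQ.eq_of_subset hS hb' hb hSb' hSb
    refine eq_of_comp_eq_of_eq_zero_of_notMem_range ((forall_notMem_range_orderEmbOfFin h).2 hyb')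
      (fun k hk => by rw [extend_apply' _ _ _ hk]; rfl) ?_
    rw [extend_comp e.injective]
    exact hz _ ⟨hyC, fun j hj => hyf _ (mem_preimage.1 hj)⟩

theorem isGS_blockCode (hQ : isSteiner t m n Q) (hC : isGS g t w m C) :
    isGS g t w n (blockCode Q C) :=
  ⟨fun _ hx => hammingNorm_of_mem_blockCode hC.1 hx,
    fun _ hx _ hy hxy => le_hammingDist_of_mem_blockCode hQ hC hx hy hxy,
    fun _ hS _ hf => existsUnique_mem_blockCode hQ hC hS hf⟩

variable {ι : Type*} [Fintype ι] {Q : ι → Finset (Finset (Fin n))}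

/-- The support of a weight-`w` word lies in a unique block of the `S(w,m,n)`, which
determines both the resolution class and the restriction of the word. -/
theorem eq_and_not_disjoint_of_mem_blockCode (hQS : isSteiner w m n (univ.biUnion Q))
    (hQdisj : ∀ i j, i ≠ j → Disjoint (Q i) (Q j)) {i j : ι} {C D : Finset (Fin m → ZMod (g + 1))}
    {x : Fin n → ZMod (g + 1)} (hx : hammingNorm x = w) (hxC : x ∈ blockCode (Q i) C)
    (hxD : x ∈ blockCode (Q j) D) : i = j ∧ ¬Disjoint C D := by
  obtain ⟨b, hb, h, hxb, hbC⟩ := mem_blockCode.1 hxC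
  obtain ⟨b', hb', h', hxb', hbD⟩ := mem_blockCode.1 hxD
  obtain rfl := hQS.eq_of_subset hx (mem_biUnion.2 ⟨i, mem_univ i, hb⟩)
    (mem_biUnion.2 ⟨j, mem_univ j, hb'⟩) (filter_ne_zero_subset_iff.2 hxb)
    (filter_ne_zero_subset_iff.2 hxb')
  refine ⟨?_, not_disjoint_iff.2 ⟨_, hbC, hbD⟩⟩
  by_contra hij
  exact disjoint_left.1 (hQdisj i j hij) hb hb'

theorem exists_mem_blockCode (hQS : isSteiner w m n (univ.biUnion Q))
    {L : Finset (Finset (Fin m → ZMod (g + 1)))}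
    (hL : ∀ c : Fin m → ZMod (g + 1), hammingNorm c = w → ∃ C ∈ L, c ∈ C)
    {x : Fin n → ZMod (g + 1)} (hx : hammingNorm x = w) :
    ∃ i, ∃ C ∈ L, x ∈ blockCode (Q i) C := by
  obtain ⟨b, ⟨hbQ, hxb⟩, -⟩ := hQS.2 _ hx
  obtain ⟨i, -, hb⟩ := mem_biUnion.1 hbQ
  have h := hQS.1 b hbQ
  have hxb' := filter_ne_zero_subset_iff.1 hxb
  obtain ⟨C, hCL, hxC⟩ := hL (x ∘ b.orderEmbOfFin h) (by
    rw [hammingNorm_comp_of_eq_zero_of_notMem_range (b.orderEmbOfFin h).injective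
      ((forall_notMem_range_orderEmbOfFin h).2 hxb'), hx])
  exact ⟨i, C, hCL, mem_blockCode.2 ⟨b, hb, h, hxb', hxC⟩⟩

end LargeSet

theorem stmt11_general (g t w w' n p : ℕ)
    (Q : Fin p → Finset (Finset (Fin n)))
    (hQ : ∀ i, isSteiner t w' n (Q i))
    (hQdisj : ∀ i j, i ≠ j → Disjoint (Q i) (Q j))
    (hQS : isSteiner w w' n (Finset.univ.biUnion Q))
    (L : Finset (Finset (Fin w' → ZMod (g + 1))))
    (hL : ∀ C ∈ L, isGS g t w w' C)
    (hLdisj : ∀ C ∈ L, ∀ D ∈ L, C ≠ D → Disjoint C D)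
    (hLcover : ∀ x : Fin w' → ZMod (g + 1), hammingNorm x = w → ∃ C ∈ L, x ∈ C) :
    ∃ P : Finset (Finset (Fin n → ZMod (g + 1))),
      (∀ C ∈ P, isGS g t w n C) ∧
      (∀ C ∈ P, ∀ D ∈ P, C ≠ D → Disjoint C D) ∧
      ∀ x : Fin n → ZMod (g + 1), hammingNorm x = w → ∃ C ∈ P, x ∈ C := by
  refine ⟨(univ ×ˢ L).image fun iC => blockCode (Q iC.1) iC.2, ?_, ?_, ?_⟩
  · simp only [mem_image, mem_product, mem_univ, true_and, Prod.exists, forall_exists_index,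
      and_imp]
    rintro _ i C hC rfl
    exact isGS_blockCode (hQ i) (hL C hC)
  · simp only [mem_image, mem_product, mem_univ, true_and, Prod.exists, forall_exists_index,
      and_imp]
    rintro _ i C hC rfl _ j D hD rfl hne
    refine disjoint_left.2 fun x hxC hxD => hne ?_
    obtain ⟨rfl, hCD⟩ := eq_and_not_disjoint_of_mem_blockCode hQS hQdisj
      (hammingNorm_of_mem_blockCode (hL C hC).1 hxC) hxC hxD
    rw [not_imp_comm.1 (hLdisj C hC D hD) hCD]
  · intro x hx
    obtain ⟨i, C, hC, hxC⟩ := exists_mem_blockCode hQS hLcover hx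
    exact ⟨blockCode (Q i) C, mem_image.2 ⟨(i, C), mem_product.2 ⟨mem_univ i, hC⟩, rfl⟩, hxC⟩

/-- If there exists a `t`-resolvable `S(w,w',n)` (an `S(w,w',n)` whose block
set is partitioned into `p = C(n-t,w-t)/C(w'-t,w-t)` pairwise disjoint
`S(t,w',n)`s) and a large set `LGS(t,w,w',g)` (a partition of all weight-`w`
words of length `w'` over `Z_{g+1}` into `g^(w-t)·C(w'-t,w-t)` pairwise
disjoint `GS(t,w,w',g)`s), then there exists a large set `LGS(t,w,n,g)`:
a partition of all weight-`w` words of length `n` over `Z_{g+1}` into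
pairwise disjoint `GS(t,w,n,g)`s. -/
theorem stmt11 (g t w w' n p : ℕ)
    (hp : p * Nat.choose (w' - t) (w - t) = Nat.choose (n - t) (w - t))
    (Q : Fin p → Finset (Finset (Fin n)))
    (hQ : ∀ i, isSteiner t w' n (Q i))
    (hQdisj : ∀ i j, i ≠ j → Disjoint (Q i) (Q j))
    (hQS : isSteiner w w' n (Finset.univ.biUnion Q))
    (L : Finset (Finset (Fin w' → ZMod (g + 1))))
    (hL : ∀ C ∈ L, isGS g t w w' C)
    (hLdisj : ∀ C ∈ L, ∀ D ∈ L, C ≠ D → Disjoint C D)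
    (hLcover : ∀ x : Fin w' → ZMod (g + 1), hammingNorm x = w → ∃ C ∈ L, x ∈ C)
    (hLcard : L.card = g ^ (w - t) * Nat.choose (w' - t) (w - t)) :
    ∃ P : Finset (Finset (Fin n → ZMod (g + 1))),
      (∀ C ∈ P, isGS g t w n C) ∧
      (∀ C ∈ P, ∀ D ∈ P, C ≠ D → Disjoint C D) ∧
      ∀ x : Fin n → ZMod (g + 1), hammingNorm x = w → ∃ C ∈ P, x ∈ C :=
  stmt11_general g t w w' n p Q hQ hQdisj hQS L hL hLdisj hLcover
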